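/- Let δ > 0, λ ≥ 1, σ ∈ [0,1/2], r ∈ (0,δ), and suppose 4(δ−r)(δμ₁−rμ₂) ≥ [λ^{1−2σ}ω(1/λ)]² + 2δ(1+2r)[λ^{1−2σ}ω(1/λ)] + 8rδ³. Let c be ω-continuous with μ₁ ≤ c(t) ≤ μ₂ and u solve u'' + 2δλ^{2σ}u' + λ²c(t)u = 0. Then |u'(t)|² + 2λ²μ₁|u(t)|² ≤ [4u₁² + 2(3δ²λ^{4σ}+λ²μ₂)u₀²] exp(−2rλ^{2σ}t) for every t ≥ 0. -/

import Mathlib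

/-!
Averaging `c` over windows of length `1/λ` gives a `C¹` coefficient `c_ε`, still between `μ₁`
and `μ₂`, which is `ω(1/λ)`-close to `c` and whose derivative is at most `λ ω(1/λ)`. For the
approximate energy `E_ε = (u' + δλ^{2σ}u)² + δ²λ^{4σ}u² + λ²c_ε u²`, the quantity
`E_ε' + 2rλ^{2σ}E_ε` is a quadratic form in `(u', u)` whose discriminant is nonpositive by the
assumption on `δ, r, μ₁, μ₂`; Grönwall then gives `E_ε(t) ≤ E_ε(0) e^{-2rλ^{2σ}t}`, and
`E_ε` is comparable to `|u'|² + 2λ²μ₁|u|²` from both sides.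
-/

open Real MeasureTheory Filter Topology Set

lemma uniformContinuous_of_dist_le_modulus {α β : Type*} [PseudoMetricSpace α]
    [PseudoMetricSpace β] {f : α → β} {ω : ℝ → ℝ} (hω : Tendsto ω (𝓝 0) (𝓝 0))
    (hf : ∀ a b, dist (f a) (f b) ≤ ω (dist a b)) : UniformContinuous f := by
  rw [Metric.uniformContinuous_iff]
  intro ε hε
  obtain ⟨η, hη, hωη⟩ := Metric.tendsto_nhds_nhds.1 hω ε hε
  refine ⟨η, hη, fun {a b} hab => (hf a b).trans_lt ?_⟩
  have := hωη (x := dist a b) (by simpa using hab)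
  rw [Real.dist_0_eq_abs] at this
  exact (le_abs_self _).trans_lt this

lemma abs_sub_comp_abs_le {c ω : ℝ → ℝ} (hω : Monotone ω)
    (hc : ∀ a ≥ (0:ℝ), ∀ b ≥ (0:ℝ), |c a - c b| ≤ ω |a - b|) (a b : ℝ) :
    |c (|a|) - c (|b|)| ≤ ω |a - b| :=
  (hc _ (abs_nonneg a) _ (abs_nonneg b)).trans (hω (abs_abs_sub_abs_le_abs_sub a b))

section MovingAverage

variable {f : ℝ → ℝ} {ε t : ℝ}

/-- For `ε = 1/λ` this is the mollified coefficient `c_ε`. -/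
noncomputable def movingAverage (f : ℝ → ℝ) (ε t : ℝ) : ℝ :=
  ε⁻¹ * ∫ x in t..t + ε, f x

lemma hasDerivAt_movingAverage (hf : Continuous f) (ε t : ℝ) :
    HasDerivAt (movingAverage f ε) (ε⁻¹ * (f (t + ε) - f t)) t := by
  have hF : ∀ x, HasDerivAt (fun x => ∫ y in (0:ℝ)..x, f y) (f x) x := fun x =>
    (hf.integral_hasStrictDerivAt 0 x).hasDerivAt
  refine ((((hF (t + ε)).comp_add_const t ε).sub (hF t)).const_mul ε⁻¹).congr_of_eventuallyEq
    (Eventually.of_forall fun x => ?_)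
  rw [movingAverage, ← intervalIntegral.integral_interval_sub_left
    (hf.intervalIntegrable _ _) (hf.intervalIntegrable _ _)]
  rfl

lemma movingAverage_le {M : ℝ} (hf : IntervalIntegrable f volume t (t + ε)) (hε : 0 < ε)
    (h : ∀ x ∈ Icc t (t + ε), f x ≤ M) : movingAverage f ε t ≤ M := by
  have := intervalIntegral.integral_mono_on (by linarith) hf intervalIntegrable_const h
  rw [intervalIntegral.integral_const, smul_eq_mul, add_sub_cancel_left] at this
  rw [movingAverage, inv_mul_le_iff₀ hε]
  linarith

lemma le_movingAverage {m : ℝ} (hf : IntervalIntegrable f volume t (t + ε)) (hε : 0 < ε)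
    (h : ∀ x ∈ Icc t (t + ε), m ≤ f x) : m ≤ movingAverage f ε t := by
  have := intervalIntegral.integral_mono_on (by linarith) intervalIntegrable_const hf h
  rw [intervalIntegral.integral_const, smul_eq_mul, add_sub_cancel_left] at this
  rw [movingAverage, le_inv_mul_iff₀ hε]
  linarith

lemma abs_movingAverage_sub_le {y C : ℝ} (hf : IntervalIntegrable f volume t (t + ε))
    (hε : 0 < ε) (h : ∀ x ∈ Icc t (t + ε), |f x - y| ≤ C) :
    |movingAverage f ε t - y| ≤ C := by
  rw [abs_sub_le_iff]
  constructor
  · linarith [movingAverage_le hf hε (M := y + C) fun x hx =>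
      by linarith [(abs_sub_le_iff.1 (h x hx)).1]]
  · linarith [le_movingAverage hf hε (m := y - C) fun x hx =>
      by linarith [(abs_sub_le_iff.1 (h x hx)).2]]

end MovingAverage

lemma exists_hasDerivAt_approx_of_modulus {c ω : ℝ → ℝ} {μ₁ μ₂ ε : ℝ} (hε : 0 < ε)
    (hω_cont : Tendsto ω (𝓝 0) (𝓝 0)) (hω_mono : Monotone ω)
    (hc_bound : ∀ t ≥ (0:ℝ), μ₁ ≤ c t ∧ c t ≤ μ₂)
    (hc_ω : ∀ a ≥ (0:ℝ), ∀ b ≥ (0:ℝ), |c a - c b| ≤ ω |a - b|) :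
    ∃ κ κ' : ℝ → ℝ, (∀ t, HasDerivAt κ (κ' t) t) ∧ (∀ t, μ₁ ≤ κ t ∧ κ t ≤ μ₂) ∧
      (∀ t ≥ (0:ℝ), |κ t - c t| ≤ ω ε) ∧ ∀ t, |κ' t| ≤ ω ε / ε := by
  -- the even extension of `c` keeps both the bounds and the modulus
  set d : ℝ → ℝ := fun t => c |t|
  have hd_ω : ∀ a b, |d a - d b| ≤ ω |a - b| := abs_sub_comp_abs_le hω_mono hc_ω
  have hd_cont : Continuous d :=
    (uniformContinuous_of_dist_le_modulus hω_cont fun a b => hd_ω a b).continuous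
  have hd_int : ∀ a b, IntervalIntegrable d volume a b := hd_cont.intervalIntegrable
  refine ⟨movingAverage d ε, fun t => ε⁻¹ * (d (t + ε) - d t),
    hasDerivAt_movingAverage hd_cont ε, fun t => ⟨?_, ?_⟩, fun t ht => ?_, fun t => ?_⟩
  · exact le_movingAverage (hd_int _ _) hε fun x _ => (hc_bound _ (abs_nonneg x)).1
  · exact movingAverage_le (hd_int _ _) hε fun x _ => (hc_bound _ (abs_nonneg x)).2
  · refine abs_movingAverage_sub_le (hd_int _ _) hε fun x hx => ?_
    have hdt : d t = c t := by simp only [d, abs_of_nonneg ht]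
    rw [← hdt]
    refine (hd_ω x t).trans (hω_mono ?_)
    rw [abs_of_nonneg (by linarith [hx.1])]
    linarith [hx.2]
  · have := hd_ω (t + ε) t
    rw [add_sub_cancel_left, abs_of_pos hε] at this
    rw [abs_mul, abs_inv, abs_of_pos hε, div_eq_inv_mul]
    exact mul_le_mul_of_nonneg_left this (by positivity)

lemma quadratic_form_nonpos_of_discrim_nonpos {a b c : ℝ} (ha : a < 0)
    (h : discrim a b c ≤ 0) (x y : ℝ) : a * x ^ 2 + b * x * y + c * y ^ 2 ≤ 0 := by
  rw [discrim] at h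
  nlinarith [sq_nonneg (2 * a * x + b * y), mul_nonpos_of_nonpos_of_nonneg h (sq_nonneg y),
    mul_pos_of_neg_of_neg ha ha, sq_nonneg y, sq_nonneg x]

lemma le_mul_exp_of_hasDerivAt_le {f f' : ℝ → ℝ} {K a : ℝ}
    (hf : ∀ t ≥ a, HasDerivAt f (f' t) t) (hle : ∀ t ≥ a, f' t ≤ K * f t) {t : ℝ}
    (ht : a ≤ t) : f t ≤ f a * exp (K * (t - a)) := by
  have := le_gronwallBound_of_liminf_deriv_right_le (δ := f a) (ε := 0)
    (fun x hx => (hf x hx.1).continuousAt.continuousWithinAt)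
    (fun x hx _ hr => (hf x hx.1).hasDerivWithinAt.liminf_right_slope_le hr) le_rfl
    (fun x hx => by simpa using hle x hx.1) t ⟨ht, le_rfl⟩
  rwa [gronwallBound_ε0] at this

section DampedEnergy

/-- At `x = u'`, `y = u`, with `a = δλ^{2σ}` and `κ = λ²c_ε`, this is the energy `E_ε`. -/
def dampedEnergy (a κ x y : ℝ) : ℝ :=
  (x + a * y) ^ 2 + a ^ 2 * y ^ 2 + κ * y ^ 2

lemma sq_add_le_two_mul_dampedEnergy {a κ μ : ℝ} (hμ : μ ≤ κ) (x y : ℝ) :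
    x ^ 2 + 2 * μ * y ^ 2 ≤ 2 * dampedEnergy a κ x y := by
  rw [dampedEnergy]
  nlinarith [sq_nonneg (x + 2 * a * y), mul_nonneg (sub_nonneg.2 hμ) (sq_nonneg y)]

lemma two_mul_dampedEnergy_le {a κ M : ℝ} (hM : κ ≤ M) (x y : ℝ) :
    2 * dampedEnergy a κ x y ≤ 4 * x ^ 2 + 2 * (3 * a ^ 2 + M) * y ^ 2 := by
  rw [dampedEnergy]
  nlinarith [sq_nonneg (x - a * y), mul_nonneg (sub_nonneg.2 hM) (sq_nonneg y)]

lemma hasDerivAt_dampedEnergy {u u' u'' κ : ℝ → ℝ} {a k κ' t : ℝ}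
    (hu : HasDerivAt u (u' t) t) (hu' : HasDerivAt u' (u'' t) t) (hκ : HasDerivAt κ κ' t)
    (hode : u'' t + 2 * a * u' t + k * u t = 0) :
    HasDerivAt (fun t => dampedEnergy a (κ t) (u' t) (u t))
      (-2 * a * u' t ^ 2 + 2 * (κ t - k) * u' t * u t + (κ' - 2 * a * k) * u t ^ 2) t := by
  have h : HasDerivAt (fun t => dampedEnergy a (κ t) (u' t) (u t)) _ t :=
    (((hu'.add (hu.const_mul a)).pow 2).add ((hu.pow 2).const_mul (a ^ 2))).add
      (hκ.mul (hu.pow 2))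
  refine h.congr_deriv ?_
  simp only [Pi.add_apply, Nat.cast_ofNat]
  linear_combination (2 * (u' t + a * u t)) * hode

/-- Here `s = λ^{2σ}`, `w = ω(1/λ)` and `W = λ^{1-2σ}ω(1/λ)`; the left side is `E_ε'` as
computed by `hasDerivAt_dampedEnergy`. -/
lemma dampedEnergy_dissipation {δ r s l w W μ₁ μ₂ k κ κ' : ℝ} (hr : 0 < r) (hrδ : r < δ)
    (hs : 0 < s) (hsl : s ≤ l) (hwW : l * w = s * W) (hκk : |κ - k| ≤ w) (hκ' : |κ'| ≤ l * w)
    (hk : μ₁ ≤ k) (hκ : κ ≤ μ₂)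
    (hmain : 4 * (δ - r) * (δ * μ₁ - r * μ₂) ≥ W ^ 2 + 2 * δ * (1 + 2 * r) * W + 8 * r * δ ^ 3)
    (x y : ℝ) :
    -2 * (δ * s) * x ^ 2 + 2 * (l ^ 2 * κ - l ^ 2 * k) * x * y
      + (l ^ 2 * κ' - 2 * (δ * s) * (l ^ 2 * k)) * y ^ 2
      ≤ -(2 * r * s) * dampedEnergy (δ * s) (l ^ 2 * κ) x y := by
  have hδ : 0 < δ := hr.trans hrδ
  have hl : 0 < l := hs.trans_le hsl
  have hW : 0 ≤ W := by
    have : 0 ≤ s * W := hwW ▸ mul_nonneg hl.le ((abs_nonneg _).trans hκk)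
    exact nonneg_of_mul_nonneg_right (by linarith) hs
  set p := l ^ 2 * (κ - k)
  set Q := l ^ 2 * κ'
  have hp : |p| ≤ l * s * W := by
    rw [abs_mul, abs_of_nonneg (by positivity), mul_assoc, ← hwW, ← mul_assoc, ← sq]
    exact mul_le_mul_of_nonneg_left hκk (by positivity)
  have hQ : Q ≤ l ^ 2 * s * W := by
    calc Q ≤ l ^ 2 * |κ'| := mul_le_mul_of_nonneg_left (le_abs_self _) (by positivity)
      _ ≤ l ^ 2 * (l * w) := mul_le_mul_of_nonneg_left hκ' (by positivity)
      _ = l ^ 2 * s * W := by rw [hwW]; ring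
  have hdisc : discrim (-(2 * (δ - r) * s)) (2 * p + 4 * r * δ * s ^ 2)
      (Q + 4 * r * δ ^ 2 * s ^ 3 + 2 * s * l ^ 2 * (r * κ - δ * k)) ≤ 0 := by
    rw [discrim]
    have hmain' := mul_le_mul_of_nonneg_right hmain (by positivity : (0:ℝ) ≤ 4 * s ^ 2 * l ^ 2)
    have h1 : 0 ≤ r * δ * l * s ^ 2 * W * (l - s) :=
      mul_nonneg (by positivity) (sub_nonneg.2 hsl)
    have h3 : 0 ≤ r * δ ^ 3 * s ^ 2 * ((l - s) * (l + s)) :=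
      mul_nonneg (by positivity) (mul_nonneg (sub_nonneg.2 hsl) (by positivity))
    have c1 := mul_le_mul_of_nonneg_left (abs_le.1 hp).2
      (by positivity : (0:ℝ) ≤ 16 * r * δ * s ^ 2)
    have c2 := mul_le_mul_of_nonneg_left hQ
      (mul_nonneg (by linarith : (0:ℝ) ≤ 8 * (δ - r)) hs.le)
    have c3 : (16 * (δ - r) * s ^ 2 * l ^ 2) * (r * κ - δ * k)
        ≤ (16 * (δ - r) * s ^ 2 * l ^ 2) * (-(δ * μ₁ - r * μ₂)) :=
      mul_le_mul_of_nonneg_left (by nlinarith) (mul_nonneg (by nlinarith) (by positivity))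
    have csq : p ^ 2 ≤ (l * s * W) ^ 2 := sq_le_sq' (abs_le.1 hp).1 (abs_le.1 hp).2
    nlinarith [mul_nonneg (by positivity : (0:ℝ) ≤ r * l ^ 2 * s ^ 2) hW,
      (by positivity : (0:ℝ) ≤ r ^ 2 * δ ^ 2 * s ^ 4)]
  have := quadratic_form_nonpos_of_discrim_nonpos (by nlinarith) hdisc x y
  rw [dampedEnergy]
  linear_combination this

end DampedEnergy

theorem stmt10_general (δ l σ r μ₁ μ₂ : ℝ) (hl : 1 ≤ l)
    (hσ : 0 ≤ σ ∧ σ ≤ 1/2) (hr : 0 < r ∧ r < δ)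
    (ω : ℝ → ℝ) (hω_cont : Continuous ω) (hω0 : ω 0 = 0)
    (hω_mono : Monotone ω)
    (hmain : 4 * (δ - r) * (δ * μ₁ - r * μ₂) ≥
      (l ^ (1 - 2*σ) * ω (1/l)) ^ 2
      + 2 * δ * (1 + 2*r) * (l ^ (1 - 2*σ) * ω (1/l)) + 8 * r * δ ^ 3)
    (c : ℝ → ℝ)
    (hc_bound : ∀ t ≥ (0:ℝ), μ₁ ≤ c t ∧ c t ≤ μ₂)
    (hc_ω : ∀ a ≥ (0:ℝ), ∀ b ≥ (0:ℝ), |c a - c b| ≤ ω |a - b|)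
    (u u' u'' : ℝ → ℝ)
    (hu : ∀ t, HasDerivAt u (u' t) t) (hu' : ∀ t, HasDerivAt u' (u'' t) t)
    (hode : ∀ t ≥ (0:ℝ), u'' t + 2 * δ * l ^ (2*σ) * u' t + l ^ 2 * c t * u t = 0)
    (u₀ u₁ : ℝ) (h0 : u 0 = u₀) (h1 : u' 0 = u₁) :
    ∀ t ≥ (0:ℝ),
      (u' t) ^ 2 + 2 * l ^ 2 * μ₁ * (u t) ^ 2 ≤
        (4 * u₁ ^ 2 + 2 * (3 * δ ^ 2 * l ^ (4*σ) + l ^ 2 * μ₂) * u₀ ^ 2)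
          * Real.exp (-(2 * r * l ^ (2*σ)) * t) := by
  intro t ht
  have hl0 : 0 < l := one_pos.trans_le hl
  obtain ⟨κ, κ', hκ, hκ_bound, hκ_close, hκ'⟩ := exists_hasDerivAt_approx_of_modulus
    (one_div_pos.2 hl0) (by simpa [hω0] using hω_cont.tendsto 0) hω_mono hc_bound hc_ω
  simp only [div_div_eq_mul_div, div_one, mul_comm (ω _)] at hκ'
  set s := l ^ (2*σ)
  have hsl : s ≤ l := by
    simpa using rpow_le_rpow_of_exponent_le hl (show 2*σ ≤ 1 by linarith [hσ.2])
  have hs4 : l ^ (4*σ) = s ^ 2 := by rw [sq, ← rpow_add hl0]; ring_nf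
  have hwW : l * ω (1/l) = s * (l ^ (1 - 2*σ) * ω (1/l)) := by
    rw [← mul_assoc, ← rpow_add hl0, add_sub_cancel, rpow_one]
  set E := fun t => dampedEnergy (δ * s) (l ^ 2 * κ t) (u' t) (u t)
  have hE : ∀ t ≥ (0:ℝ), HasDerivAt E _ t := fun t ht =>
    hasDerivAt_dampedEnergy (k := l ^ 2 * c t) (hu t) (hu' t) ((hκ t).const_mul (l ^ 2))
      (by linear_combination hode t ht)
  have hdecay := le_mul_exp_of_hasDerivAt_le hE (fun t ht =>
    dampedEnergy_dissipation hr.1 hr.2 (rpow_pos_of_pos hl0 _) hsl hwW (hκ_close t ht) (hκ' t)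
      (hc_bound t ht).1 (hκ_bound t).2 hmain _ _) ht
  calc (u' t) ^ 2 + 2 * l ^ 2 * μ₁ * (u t) ^ 2 ≤ 2 * E t := by
        rw [mul_assoc 2]
        exact sq_add_le_two_mul_dampedEnergy (by nlinarith [(hκ_bound t).1]) _ _
    _ ≤ 2 * E 0 * exp (-(2 * r * s) * t) := by rw [sub_zero] at hdecay; linarith
    _ ≤ _ := by
        rw [hs4]
        gcongr
        refine (two_mul_dampedEnergy_le (M := l ^ 2 * μ₂) ?_ _ _).trans_eq (by rw [h0, h1]; ring)
        exact mul_le_mul_of_nonneg_left (hκ_bound 0).2 (by positivity)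

theorem stmt10 (δ l σ r μ₁ μ₂ : ℝ) (hδ : 0 < δ) (hl : 1 ≤ l)
    (hσ : 0 ≤ σ ∧ σ ≤ 1/2) (hr : 0 < r ∧ r < δ)
    (ω : ℝ → ℝ) (hω_cont : Continuous ω) (hω0 : ω 0 = 0)
    (hω_pos : ∀ x > (0:ℝ), 0 < ω x) (hω_mono : Monotone ω)
    (hω_mono2 : ∀ x y : ℝ, 0 < x → x ≤ y → x / ω x ≤ y / ω y)
    (hmain : 4 * (δ - r) * (δ * μ₁ - r * μ₂) ≥
      (l ^ (1 - 2*σ) * ω (1/l)) ^ 2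
      + 2 * δ * (1 + 2*r) * (l ^ (1 - 2*σ) * ω (1/l)) + 8 * r * δ ^ 3)
    (c : ℝ → ℝ)
    (hc_bound : ∀ t ≥ (0:ℝ), μ₁ ≤ c t ∧ c t ≤ μ₂)
    (hc_ω : ∀ a ≥ (0:ℝ), ∀ b ≥ (0:ℝ), |c a - c b| ≤ ω |a - b|)
    (u u' u'' : ℝ → ℝ)
    (hu : ∀ t, HasDerivAt u (u' t) t) (hu' : ∀ t, HasDerivAt u' (u'' t) t)
    (hode : ∀ t ≥ (0:ℝ), u'' t + 2 * δ * l ^ (2*σ) * u' t + l ^ 2 * c t * u t = 0)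
    (u₀ u₁ : ℝ) (h0 : u 0 = u₀) (h1 : u' 0 = u₁) :
    ∀ t ≥ (0:ℝ),
      (u' t) ^ 2 + 2 * l ^ 2 * μ₁ * (u t) ^ 2 ≤
        (4 * u₁ ^ 2 + 2 * (3 * δ ^ 2 * l ^ (4*σ) + l ^ 2 * μ₂) * u₀ ^ 2)
          * Real.exp (-(2 * r * l ^ (2*σ)) * t) :=
  stmt10_general δ l σ r μ₁ μ₂ hl hσ hr ω hω_cont hω0 hω_mono hmain c hc_bound hc_ω u u' u'' hu hu'
    hode u₀ u₁ h0 h1
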